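/- arXiv:2209.10094 — 5 statements merged into one kernel-verified Lean document; each statement's English description precedes it below -/
import Mathlib

section
/- For the contour-integral bracket ⟨V_1,...,V_n⟩ = (1/2πi) ∮_Γ f'(z) Tr(∏_j V_j (z−D)^{-1}) dz on a finite-dimensional Hilbert space, the commutation identity ⟨aV_1, V_2,...,V_n⟩ − ⟨V_1,...,V_{n−1}, V_n a⟩ = ⟨V_1,...,V_n,[D,a]⟩ holds for all bounded operators V_1,...,V_n and a. -/
/-- The contour-integral bracket `⟨V_1,…,V_n⟩ = (1/2πi) ∮_Γ f'(z) Tr(∏_j V_j (z−D)⁻¹) dz`,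
with `Γ` the circle of radius `R` around `0` and `g` playing the role of `f'`. -/
noncomputable def bracketC {N : ℕ} (g : ℂ → ℂ) (D : Matrix (Fin N) (Fin N) ℂ) (R : ℝ)
    {n : ℕ} (V : Fin n → Matrix (Fin N) (Fin N) ℂ) : ℂ :=
  (2 * (Real.pi : ℂ) * Complex.I)⁻¹ *
    ∮ z in C(0, R), g z *
      Matrix.trace ((List.ofFn
        (fun j => V j * (z • (1 : Matrix (Fin N) (Fin N) ℂ) - D)⁻¹)).prod)

/-!
Pointwise on the contour, with `r = (z - D)⁻¹`, the resolvent identity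
`r a - a r = r [D, a] r` and cyclicity of the trace give
`Tr(a V₁ r ⋯ Vₙ r) - Tr(V₁ r ⋯ Vₙ a r) = Tr(V₁ r ⋯ Vₙ r [D, a] r)`.
Since `Γ` avoids the spectrum of `D`, all three integrands are continuous on `Γ`,
so the identity integrates.
-/

open Matrix Metric

theorem mul_sub_mul_eq_of_mul_eq_one {R : Type*} [Ring R] {r A : R} (hl : r * A = 1)
    (hr : A * r = 1) (a : R) : r * a - a * r = r * (a * A - A * a) * r := by
  calc r * a - a * r = r * a * (A * r) - (r * A) * a * r := by rw [hl, hr, mul_one, one_mul]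
    _ = r * (a * A - A * a) * r := by noncomm_ring

theorem Matrix.resolvent_mul_sub_mul_resolvent {m K : Type*} [Fintype m] [DecidableEq m]
    [CommRing K] {D : Matrix m m K} {z : K} (h : IsUnit (z • (1 : Matrix m m K) - D))
    (a : Matrix m m K) :
    (z • 1 - D)⁻¹ * a - a * (z • 1 - D)⁻¹ = (z • 1 - D)⁻¹ * (D * a - a * D) * (z • 1 - D)⁻¹ := by
  have hdet := (isUnit_iff_isUnit_det _).mp h
  rw [mul_sub_mul_eq_of_mul_eq_one (nonsing_inv_mul _ hdet) (mul_nonsing_inv _ hdet)]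
  congr 2
  simp only [Matrix.mul_sub, Matrix.sub_mul, mul_smul_comm, smul_mul_assoc, Matrix.mul_one,
    Matrix.one_mul]
  abel

section ListProd

variable {M : Type*} [Monoid M] {n : ℕ} (V : Fin (n + 1) → M) (r : M)

theorem List.prod_ofFn_update_zero_mul (a : M) :
    (List.ofFn fun j => Function.update V 0 (a * V 0) j * r).prod =
      a * (List.ofFn fun j => V j * r).prod := by
  simp [List.ofFn_succ, Fin.succ_ne_zero, mul_assoc]

theorem List.prod_ofFn_mul_eq_castSucc_mul_last :
    (List.ofFn fun j => V j * r).prod =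
      (List.ofFn fun i : Fin n => V i.castSucc * r).prod * (V (Fin.last n) * r) := by
  rw [List.ofFn_succ', List.prod_concat]

theorem List.prod_ofFn_update_last_mul (a : M) :
    (List.ofFn fun j => Function.update V (Fin.last n) (V (Fin.last n) * a) j * r).prod =
      (List.ofFn fun i : Fin n => V i.castSucc * r).prod * (V (Fin.last n) * (a * r)) := by
  rw [List.ofFn_succ', List.prod_concat]
  simp [Fin.castSucc_ne_last, mul_assoc]

theorem List.prod_ofFn_snoc_mul (b : M) :
    (List.ofFn fun j : Fin (n + 2) => Fin.snoc (α := fun _ => M) V b j * r).prod =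
      (List.ofFn fun j => V j * r).prod * (b * r) := by
  rw [List.ofFn_succ', List.prod_concat]
  simp

end ListProd

theorem Matrix.trace_prod_ofFn_update_sub {m K : Type*} [Fintype m] [DecidableEq m]
    [CommRing K] {n : ℕ} (V : Fin (n + 1) → Matrix m m K) {r a b : Matrix m m K}
    (hr : r * a - a * r = r * b * r) :
    trace (List.ofFn fun j => Function.update V 0 (a * V 0) j * r).prod -
      trace (List.ofFn fun j => Function.update V (Fin.last n) (V (Fin.last n) * a) j * r).prod =
    trace (List.ofFn fun j : Fin (n + 2) => Fin.snoc V b j * r).prod := by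
  rw [List.prod_ofFn_update_zero_mul, List.prod_ofFn_update_last_mul, List.prod_ofFn_snoc_mul,
    List.prod_ofFn_mul_eq_castSucc_mul_last, trace_mul_comm a, ← trace_sub]
  set P := (List.ofFn fun i : Fin n => V i.castSucc * r).prod
  set v := V (Fin.last n)
  congr 1
  calc P * (v * r) * a - P * (v * (a * r)) = P * v * (r * a - a * r) := by noncomm_ring
    _ = P * (v * r) * (b * r) := by rw [hr]; noncomm_ring

theorem pos_of_forall_mem_spectrum_norm_lt {A : Type*} [Ring A] [Algebra ℂ A] [Nontrivial A]
    [FiniteDimensional ℂ A] {a : A} {R : ℝ} (h : ∀ μ ∈ spectrum ℂ a, ‖μ‖ < R) : 0 < R := by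
  obtain ⟨μ, hμ⟩ := spectrum.nonempty_of_isAlgClosed_of_finiteDimensional ℂ a
  exact (norm_nonneg μ).trans_lt (h μ hμ)

section Resolvent

variable {m 𝕜 : Type*} [Fintype m] [DecidableEq m] [NormedField 𝕜] {D : Matrix m m 𝕜}

theorem Matrix.isUnit_smul_one_sub_of_mem_sphere {R : ℝ} (hspec : ∀ μ ∈ spectrum 𝕜 D, ‖μ‖ < R)
    {z : 𝕜} (hz : z ∈ sphere (0 : 𝕜) R) : IsUnit (z • (1 : Matrix m m 𝕜) - D) := by
  have hz_notMem : z ∉ spectrum 𝕜 D := fun hmem =>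
    (hspec z hmem).ne (mem_sphere_zero_iff_norm.mp hz)
  simpa [Algebra.algebraMap_eq_smul_one] using spectrum.notMem_iff.mp hz_notMem

theorem Matrix.continuousOn_resolvent {s : Set 𝕜}
    (hs : ∀ z ∈ s, IsUnit (z • (1 : Matrix m m 𝕜) - D)) :
    ContinuousOn (fun z : 𝕜 => (z • (1 : Matrix m m 𝕜) - D)⁻¹) s := by
  intro z hz
  have hdet : (z • (1 : Matrix m m 𝕜) - D).det ≠ 0 :=
    ((isUnit_iff_isUnit_det _).mp (hs z hz)).ne_zero
  have hinv : ContinuousAt Ring.inverse (z • (1 : Matrix m m 𝕜) - D).det := by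
    rw [Ring.inverse_eq_inv']
    exact continuousAt_inv₀ hdet
  have hA : Continuous fun z : 𝕜 => z • (1 : Matrix m m 𝕜) - D := by fun_prop
  exact (continuousAt_matrix_inv _ hinv).comp_continuousWithinAt (f := fun z => z • 1 - D)
    hA.continuousWithinAt

end Resolvent

theorem circleIntegrable_mul_trace_prod_resolvent {m : Type*} [Fintype m] [DecidableEq m]
    {g : ℂ → ℂ} {D : Matrix m m ℂ} {R : ℝ} (hR : 0 ≤ R) (hspec : ∀ μ ∈ spectrum ℂ D, ‖μ‖ < R)
    (hg : ContinuousOn g (sphere 0 R)) {n : ℕ} (W : Fin n → Matrix m m ℂ) :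
    CircleIntegrable (fun z => g z * trace (List.ofFn
      fun j => W j * (z • (1 : Matrix m m ℂ) - D)⁻¹).prod) 0 R := by
  have hres := continuousOn_resolvent fun z hz => isUnit_smul_one_sub_of_mem_sphere hspec hz
  refine ContinuousOn.circleIntegrable hR (hg.mul (continuous_id.matrix_trace.comp_continuousOn ?_))
  simp only [List.ofFn_eq_map]
  exact continuousOn_list_prod _ fun j _ => continuousOn_const.mul hres

theorem bracketC_comm_general {N : ℕ} (g : ℂ → ℂ) (D : Matrix (Fin N) (Fin N) ℂ)
    (R : ℝ)
    (hspec : ∀ μ ∈ spectrum ℂ D, ‖μ‖ < R)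
    (hg : DifferentiableOn ℂ g (Metric.closedBall 0 R))
    (n : ℕ) (V : Fin (n + 1) → Matrix (Fin N) (Fin N) ℂ)
    (a : Matrix (Fin N) (Fin N) ℂ) :
    bracketC g D R (Function.update V 0 (a * V 0)) -
      bracketC g D R (Function.update V (Fin.last n) (V (Fin.last n) * a)) =
    bracketC g D R (Fin.snoc V (D * a - a * D)) := by
  rcases Nat.eq_zero_or_pos N with rfl | hN
  · simp [bracketC, Matrix.trace, circleIntegral]
  have : Nonempty (Fin N) := ⟨⟨0, hN⟩⟩
  have hR := (pos_of_forall_mem_spectrum_norm_lt hspec).le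
  have hg_sphere : ContinuousOn g (sphere 0 R) := hg.continuousOn.mono sphere_subset_closedBall
  unfold bracketC
  rw [← mul_sub, ← circleIntegral.integral_sub
    (circleIntegrable_mul_trace_prod_resolvent hR hspec hg_sphere _)
    (circleIntegrable_mul_trace_prod_resolvent hR hspec hg_sphere _)]
  congr 1
  refine circleIntegral.integral_congr hR fun z hz => ?_
  rw [← mul_sub, trace_prod_ofFn_update_sub V
    (resolvent_mul_sub_mul_resolvent (isUnit_smul_one_sub_of_mem_sphere hspec hz) a)]

/-- The commutation identity
`⟨aV_1, V_2,…,V_n⟩ − ⟨V_1,…,V_{n−1}, V_n a⟩ = ⟨V_1,…,V_n,[D,a]⟩`. -/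
theorem bracketC_comm {N : ℕ} (g : ℂ → ℂ) (D : Matrix (Fin N) (Fin N) ℂ)
    (hD : D.IsHermitian) (R : ℝ)
    (hspec : ∀ μ ∈ spectrum ℂ D, ‖μ‖ < R)
    (hg : DifferentiableOn ℂ g (Metric.closedBall 0 R))
    (n : ℕ) (V : Fin (n + 1) → Matrix (Fin N) (Fin N) ℂ)
    (a : Matrix (Fin N) (Fin N) ℂ) :
    bracketC g D R (Function.update V 0 (a * V 0)) -
      bracketC g D R (Function.update V (Fin.last n) (V (Fin.last n) * a)) =
    bracketC g D R (Fin.snoc V (D * a - a * D)) :=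
  bracketC_comm_general g D R hspec hg n V a
end

section
/- Let ⟨·⟩ be a family of multilinear functionals on B(H) satisfying cyclicity and the commutation rule ⟨aV_1,...,V_n⟩ − ⟨V_1,...,V_n a⟩ = ⟨V_1,...,V_n,[D,a]⟩, and define φ_n(a_0,...,a_n) := ⟨a_0[D,a_1],[D,a_2],...,[D,a_n]⟩. Then bφ_1 = φ_2, i.e., φ_1(a_0 a_1, a_2) − φ_1(a_0, a_1 a_2) + φ_1(a_2 a_0, a_1) = φ_2(a_0, a_1, a_2) for all a_0, a_1, a_2 ∈ A. -/
/-!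
By the Leibniz rule `a₀[D, a₁a₂] = a₀a₁[D, a₂] + a₀[D, a₁]a₂`, the term `φ₁(a₀, a₁a₂)` cancels
`φ₁(a₀a₁, a₂)` and leaves `⟨a₂a₀[D, a₁]⟩ - ⟨a₀[D, a₁]a₂⟩`, which is `⟨a₀[D, a₁], [D, a₂]⟩` by the
commutation rule for a single entry.
-/

theorem Matrix.update_vecCons_zero {M : Type*} {n : ℕ} (x y : M) (u : Fin n → M) :
    Function.update (vecCons x u) 0 y = vecCons y u :=
  Fin.update_cons_zero (α := fun _ => M) x u y

theorem MultilinearMap.map_vecCons_add {R M N : Type*} [Semiring R] [AddCommMonoid M]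
    [Module R M] [AddCommMonoid N] [Module R N] {n : ℕ}
    (f : MultilinearMap R (fun _ : Fin (n + 1) => M) N) (x y : M) (u : Fin n → M) :
    f (Matrix.vecCons (x + y) u) = f (Matrix.vecCons x u) + f (Matrix.vecCons y u) :=
  f.cons_add u x y

theorem mul_commutator_mul {R : Type*} [Ring R] (D a b c : R) :
    a * (D * (b * c) - b * c * D) = a * b * (D * c - c * D) + a * (D * b - b * D) * c := by
  noncomm_ring

theorem b_phi_one_eq_phi_two_general
    {H : Type*} [NormedAddCommGroup H] [InnerProductSpace ℂ H]
    (A : Subalgebra ℂ (H →L[ℂ] H)) (D : H →L[ℂ] H)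
    (bracket : ∀ n : ℕ, MultilinearMap ℂ (fun _ : Fin n => H →L[ℂ] H) ℂ)
    (hcomm : ∀ (n : ℕ) (V : Fin (n + 1) → (H →L[ℂ] H)) (a : H →L[ℂ] H), a ∈ A →
      bracket (n + 1) (Function.update V 0 (a * V 0)) -
        bracket (n + 1) (Function.update V (Fin.last n) (V (Fin.last n) * a)) =
      bracket (n + 2) (Fin.snoc V (D * a - a * D)))
    (a₀ a₁ a₂ : H →L[ℂ] H) (h₂ : a₂ ∈ A) :
    bracket 1 ![(a₀ * a₁) * (D * a₂ - a₂ * D)] -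
      bracket 1 ![a₀ * (D * (a₁ * a₂) - (a₁ * a₂) * D)] +
      bracket 1 ![(a₂ * a₀) * (D * a₁ - a₁ * D)] =
    bracket 2 ![a₀ * (D * a₁ - a₁ * D), D * a₂ - a₂ * D] := by
  have hcomm_one := hcomm 0 ![a₀ * (D * a₁ - a₁ * D)] a₂ h₂
  simp only [Fin.last_zero, Matrix.update_vecCons_zero, Matrix.cons_val_zero,
    Matrix.Fin.snoc_vecCons, Matrix.Fin.snoc_vecEmpty] at hcomm_one
  rw [mul_commutator_mul, (bracket 1).map_vecCons_add, ← hcomm_one, mul_assoc a₂]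
  abel

/-- With `φ_n(a_0,…,a_n) := ⟨a_0[D,a_1],[D,a_2],…,[D,a_n]⟩` defined from a family of
multilinear brackets satisfying cyclicity (I) and the commutation rule (II),
one has `bφ_1 = φ_2`:
`φ_1(a_0 a_1, a_2) − φ_1(a_0, a_1 a_2) + φ_1(a_2 a_0, a_1) = φ_2(a_0, a_1, a_2)`. -/
theorem b_phi_one_eq_phi_two
    {H : Type*} [NormedAddCommGroup H] [InnerProductSpace ℂ H] [CompleteSpace H]
    (A : Subalgebra ℂ (H →L[ℂ] H)) (D : H →L[ℂ] H) (hD : IsSelfAdjoint D)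
    (bracket : ∀ n : ℕ, MultilinearMap ℂ (fun _ : Fin n => H →L[ℂ] H) ℂ)
    (hcycl : ∀ (n : ℕ) (V : Fin (n + 1) → (H →L[ℂ] H)),
      bracket (n + 1) V = bracket (n + 1) (fun i => V (i + 1)))
    (hcomm : ∀ (n : ℕ) (V : Fin (n + 1) → (H →L[ℂ] H)) (a : H →L[ℂ] H), a ∈ A →
      bracket (n + 1) (Function.update V 0 (a * V 0)) -
        bracket (n + 1) (Function.update V (Fin.last n) (V (Fin.last n) * a)) =
      bracket (n + 2) (Fin.snoc V (D * a - a * D)))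
    (a₀ a₁ a₂ : H →L[ℂ] H) (h₀ : a₀ ∈ A) (h₁ : a₁ ∈ A) (h₂ : a₂ ∈ A) :
    bracket 1 ![(a₀ * a₁) * (D * a₂ - a₂ * D)] -
      bracket 1 ![a₀ * (D * (a₁ * a₂) - (a₁ * a₂) * D)] +
      bracket 1 ![(a₂ * a₀) * (D * a₁ - a₁ * D)] =
    bracket 2 ![a₀ * (D * a₁ - a₁ * D), D * a₂ - a₂ * D] :=
  b_phi_one_eq_phi_two_general A D bracket hcomm a₀ a₁ a₂ h₂
end

section
/- With φ_n(a_0,...,a_n) := ⟨a_0[D,a_1],...,[D,a_n]⟩ defined from a bracket satisfying cyclicity and the commutation rule, one has for n = 2: b(B_0 φ_2) = 2φ_2 − B_0 φ_3, where B_0ψ(a_0,...,a_k) := ψ(1, a_0,...,a_k). -/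
/-! Write `δᵢ = [D, aᵢ]` and expand `[D, a₀a₁]`, `[D, a₁a₂]`, `[D, a₂a₀]` by the Leibniz rule. Up to
symmetry of the two-point bracket, the left side becomes
`-(⟨a₁δ₂, δ₀⟩ - ⟨δ₂, δ₀a₁⟩) + (⟨a₂δ₀, δ₁⟩ - ⟨δ₀, δ₁a₂⟩) + 2⟨a₀δ₁, δ₂⟩ - (⟨a₀δ₁, δ₂⟩ - ⟨δ₁, δ₂a₀⟩)`.
The commutation rule turns each difference `⟨a x, y⟩ - ⟨x, y a⟩` into `⟨x, y, [D, a]⟩`, and by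
cyclicity all three are `⟨δ₀, δ₁, δ₂⟩`. -/

section Tuples

variable {α M : Type*}

theorem eq_swap_of_cyclic (f : (Fin 2 → α) → M) (hf : ∀ V, f V = f (fun i => V (i + 1)))
    (x y : α) : f ![x, y] = f ![y, x] :=
  (hf _).trans (congrArg f (by ext i; fin_cases i <;> rfl))

theorem eq_rotate_of_cyclic (f : (Fin 3 → α) → M) (hf : ∀ V, f V = f (fun i => V (i + 1)))
    (x y z : α) : f ![x, y, z] = f ![y, z, x] :=
  (hf _).trans (congrArg f (by ext i; fin_cases i <;> rfl))

theorem sub_eq_of_commutation_rule [Mul α] [AddCommGroup M] (f₂ : (Fin 2 → α) → M)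
    (f₃ : (Fin 3 → α) → M) (a d : α)
    (h : ∀ V : Fin 2 → α, f₂ (Function.update V 0 (a * V 0)) -
      f₂ (Function.update V (Fin.last 1) (V (Fin.last 1) * a)) = f₃ (Fin.snoc V d))
    (x y : α) : f₂ ![a * x, y] - f₂ ![x, y * a] = f₃ ![x, y, d] := by
  convert h ![x, y] using 3 <;> ext i <;> fin_cases i <;> rfl

end Tuples

theorem MultilinearMap.map_vecCons_add_two {k R M : Type*} [Semiring k] [AddCommMonoid R]
    [Module k R] [AddCommMonoid M] [Module k M] (φ : MultilinearMap k (fun _ : Fin 2 => R) M)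
    (u v w : R) : φ ![u + v, w] = φ ![u, w] + φ ![v, w] :=
  φ.cons_add _ u v

theorem commutator_mul {R : Type*} [Ring R] (D a b : R) :
    D * (a * b) - a * b * D = (D * a - a * D) * b + a * (D * b - b * D) := by
  noncomm_ring

theorem coboundary_identity_of_commutation_rule {R M : Type*} [Ring R] [AddCommGroup M]
    (S : Set R) (D : R) (f : R → R → M) (g : R → R → R → M)
    (hf_add : ∀ x y z, f (x + y) z = f x z + f y z) (hf_symm : ∀ x y, f x y = f y x)
    (hg_cycl : ∀ x y z, g x y z = g y z x)
    (hcomm : ∀ a ∈ S, ∀ x y, f (a * x) y - f x (y * a) = g x y (D * a - a * D))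
    {a₀ a₁ a₂ : R} (h₀ : a₀ ∈ S) (h₁ : a₁ ∈ S) (h₂ : a₂ ∈ S) :
    f (D * (a₀ * a₁) - a₀ * a₁ * D) (D * a₂ - a₂ * D) -
        f (D * a₀ - a₀ * D) (D * (a₁ * a₂) - a₁ * a₂ * D) +
        f (D * (a₂ * a₀) - a₂ * a₀ * D) (D * a₁ - a₁ * D) =
      2 • f (a₀ * (D * a₁ - a₁ * D)) (D * a₂ - a₂ * D) -
        g (D * a₀ - a₀ * D) (D * a₁ - a₁ * D) (D * a₂ - a₂ * D) := by
  have hf_add_right : ∀ x y z, f z (x + y) = f z x + f z y := fun x y z => by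
    rw [hf_symm, hf_add, hf_symm x, hf_symm y]
  rw [commutator_mul, commutator_mul, commutator_mul, hf_add, hf_add, hf_add_right]
  set δ₀ := D * a₀ - a₀ * D
  set δ₁ := D * a₁ - a₁ * D
  set δ₂ := D * a₂ - a₂ * D
  have e₁ : f (a₁ * δ₂) δ₀ - f δ₂ (δ₀ * a₁) = g δ₂ δ₀ δ₁ := hcomm a₁ h₁ δ₂ δ₀
  have e₂ : f (a₂ * δ₀) δ₁ - f δ₀ (δ₁ * a₂) = g δ₀ δ₁ δ₂ := hcomm a₂ h₂ δ₀ δ₁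
  have e₃ : f (a₀ * δ₁) δ₂ - f δ₁ (δ₂ * a₀) = g δ₁ δ₂ δ₀ := hcomm a₀ h₀ δ₁ δ₂
  linear_combination (norm := abel) -e₁ + e₂ - e₃ + hf_symm (δ₀ * a₁) δ₂ -
    hf_symm δ₀ (a₁ * δ₂) + hf_symm (δ₂ * a₀) δ₁ - hg_cycl δ₂ δ₀ δ₁ + hg_cycl δ₀ δ₁ δ₂

theorem b_B0_phi_two_general
    {H : Type*} [NormedAddCommGroup H] [InnerProductSpace ℂ H]
    (A : Subalgebra ℂ (H →L[ℂ] H)) (D : H →L[ℂ] H)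
    (bracket : ∀ n : ℕ, MultilinearMap ℂ (fun _ : Fin n => H →L[ℂ] H) ℂ)
    (hcycl : ∀ (n : ℕ) (V : Fin (n + 1) → (H →L[ℂ] H)),
      bracket (n + 1) V = bracket (n + 1) (fun i => V (i + 1)))
    (hcomm : ∀ (n : ℕ) (V : Fin (n + 1) → (H →L[ℂ] H)) (a : H →L[ℂ] H), a ∈ A →
      bracket (n + 1) (Function.update V 0 (a * V 0)) -
        bracket (n + 1) (Function.update V (Fin.last n) (V (Fin.last n) * a)) =
      bracket (n + 2) (Fin.snoc V (D * a - a * D)))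
    (a₀ a₁ a₂ : H →L[ℂ] H) (h₀ : a₀ ∈ A) (h₁ : a₁ ∈ A) (h₂ : a₂ ∈ A) :
    bracket 2 ![D * (a₀ * a₁) - (a₀ * a₁) * D, D * a₂ - a₂ * D] -
      bracket 2 ![D * a₀ - a₀ * D, D * (a₁ * a₂) - (a₁ * a₂) * D] +
      bracket 2 ![D * (a₂ * a₀) - (a₂ * a₀) * D, D * a₁ - a₁ * D] =
    2 * bracket 2 ![a₀ * (D * a₁ - a₁ * D), D * a₂ - a₂ * D] -
      bracket 3 ![D * a₀ - a₀ * D, D * a₁ - a₁ * D, D * a₂ - a₂ * D] := by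
  have key := coboundary_identity_of_commutation_rule (A : Set (H →L[ℂ] H)) D
    (fun x y => bracket 2 ![x, y]) (fun x y z => bracket 3 ![x, y, z])
    (bracket 2).map_vecCons_add_two (eq_swap_of_cyclic _ (hcycl 1))
    (eq_rotate_of_cyclic _ (hcycl 2))
    (fun a ha => sub_eq_of_commutation_rule _ _ a _ (fun V => hcomm 1 V a ha)) h₀ h₁ h₂
  rwa [two_nsmul, ← two_mul] at key

/-- With `φ_n(a_0,…,a_n) := ⟨a_0[D,a_1],…,[D,a_n]⟩` defined from a bracket satisfying
cyclicity and the commutation rule, one has for `n = 2`: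
`b(B_0 φ_2) = 2φ_2 − B_0 φ_3`, where `B_0ψ(a_0,…,a_k) := ψ(1, a_0,…,a_k)`.
Note `B_0φ_2(x,y) = ⟨[D,x],[D,y]⟩` and `B_0φ_3(x,y,z) = ⟨[D,x],[D,y],[D,z]⟩`. -/
theorem b_B0_phi_two
    {H : Type*} [NormedAddCommGroup H] [InnerProductSpace ℂ H] [CompleteSpace H]
    (A : Subalgebra ℂ (H →L[ℂ] H)) (D : H →L[ℂ] H) (hD : IsSelfAdjoint D)
    (bracket : ∀ n : ℕ, MultilinearMap ℂ (fun _ : Fin n => H →L[ℂ] H) ℂ)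
    (hcycl : ∀ (n : ℕ) (V : Fin (n + 1) → (H →L[ℂ] H)),
      bracket (n + 1) V = bracket (n + 1) (fun i => V (i + 1)))
    (hcomm : ∀ (n : ℕ) (V : Fin (n + 1) → (H →L[ℂ] H)) (a : H →L[ℂ] H), a ∈ A →
      bracket (n + 1) (Function.update V 0 (a * V 0)) -
        bracket (n + 1) (Function.update V (Fin.last n) (V (Fin.last n) * a)) =
      bracket (n + 2) (Fin.snoc V (D * a - a * D)))
    (a₀ a₁ a₂ : H →L[ℂ] H) (h₀ : a₀ ∈ A) (h₁ : a₁ ∈ A) (h₂ : a₂ ∈ A) :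
    bracket 2 ![D * (a₀ * a₁) - (a₀ * a₁) * D, D * a₂ - a₂ * D] -
      bracket 2 ![D * a₀ - a₀ * D, D * (a₁ * a₂) - (a₁ * a₂) * D] +
      bracket 2 ![D * (a₂ * a₀) - (a₂ * a₀) * D, D * a₁ - a₁ * D] =
    2 * bracket 2 ![a₀ * (D * a₁ - a₁ * D), D * a₂ - a₂ * D] -
      bracket 3 ![D * a₀ - a₀ * D, D * a₁ - a₁ * D, D * a₂ - a₂ * D] :=
  b_B0_phi_two_general A D bracket hcycl hcomm a₀ a₁ a₂ h₀ h₁ h₂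
end

section
/- For even n, the cochain φ_n(a_0,...,a_n) := ⟨a_0[D,a_1],...,[D,a_n]⟩ is a Hochschild cocycle: bφ_n = 0. In particular bφ_2 = 0. -/
/-- Merge the `j`-th and `(j+1)`-st entries of a tuple by multiplication. -/
def mergeAt {A : Type*} [Mul A] {n : ℕ} (j : Fin (n + 1)) (a : Fin (n + 2) → A) :
    Fin (n + 1) → A := fun i =>
  if (i : ℕ) < (j : ℕ) then a i.castSucc
  else if (i : ℕ) = (j : ℕ) then a i.castSucc * a i.succ
  else a i.succ

/-- The Hochschild cochain `φ_{m+1}(a_0,…,a_{m+1}) = ⟨a_0[D,a_1],[D,a_2],…,[D,a_{m+1}]⟩`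
associated to a family of brackets `br` and the operator `D`. -/
noncomputable def phiCochain {H : Type*} [NormedAddCommGroup H] [InnerProductSpace ℂ H]
    (D : H →L[ℂ] H) (br : ∀ n : ℕ, (Fin n → (H →L[ℂ] H)) → ℂ) (m : ℕ)
    (a : Fin (m + 2) → (H →L[ℂ] H)) : ℂ :=
  br (m + 1) (fun i : Fin (m + 1) =>
    if i = 0 then a 0 * (D * a 1 - a 1 * D) else D * a i.succ - a i.succ * D)

/-!
Write `c = (a₀⁅D, a₁⁆, ⁅D, a₂⁆, …, ⁅D, a_{n+1}⁆)` and `ψ = ⟨c⟩`. By the Leibniz rule every face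
`φ(a₀, …, a_j a_{j+1}, …)` of `bφ` splits into two brackets of `c` with two adjacent entries fused
into one, the fused entry carrying an extra factor `a_{j+1}` on the right or `a_j` on the left.
The commutation rule, available at every gap between entries thanks to cyclicity, says that
moving `a_j` from the right of one entry to the left of the next changes the bracket by `ψ`.
Hence the faces telescope to `bφ_n = (1 - 1 + ⋯ ± 1) ψ` with `n` signs, which vanishes for even `n`.
-/

open Function

theorem Fin.last_eq_neg_one (n : ℕ) : Fin.last n = -1 :=
  eq_neg_of_add_eq_zero_left (Fin.last_add_one n)

theorem Fin.last_add_succ {n : ℕ} (q : Fin n) : Fin.last n + q.succ = q.castSucc := by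
  rw [Fin.last_eq_neg_one, ← Fin.coeSucc_eq_succ]; abel

theorem Fin.castSucc_add_succ_succ {n : ℕ} (q : Fin n) (j : Fin (n + 1)) :
    j.castSucc + q.succ.succ = q.succ.castSucc.succAbove (j + q.succ) := by
  simp only [Fin.ext_iff, Fin.val_add_eq_ite, Fin.succAbove, Fin.lt_def, Fin.val_castSucc,
    Fin.val_succ]
  split_ifs <;> simp only [Fin.val_castSucc, Fin.val_succ, Fin.val_add_eq_ite] at * <;>
    split_ifs at * <;> omega

theorem Fin.insertNth_comp_add_succ_succ {α : Type*} {n : ℕ} (q : Fin n) (x : α)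
    (V : Fin (n + 1) → α) :
    (fun i => (Fin.insertNth q.succ.castSucc x V : Fin (n + 2) → α) (i + q.succ.succ)) =
      (Fin.snoc (fun i => V (i + q.succ)) x : Fin (n + 2) → α) := by
  funext i
  induction i using Fin.lastCases with
  | last => rw [Fin.snoc_last, Fin.last_add_succ, Fin.insertNth_apply_same]
  | cast j => rw [Fin.snoc_castSucc, Fin.castSucc_add_succ_succ, Fin.insertNth_apply_succAbove]

theorem Fin.sum_neg_one_pow_mul_castSucc_add_succ {S : Type*} [CommRing S] {n : ℕ}
    (f : Fin (n + 1) → S) :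
    ∑ i : Fin n, (-1) ^ (i : ℕ) * (f i.castSucc + f i.succ) = f 0 - (-1) ^ n * f (Fin.last n) := by
  induction n with
  | zero => simp
  | succ n ih =>
    rw [Fin.sum_univ_castSucc]
    simp only [Fin.val_castSucc, Fin.succ_castSucc]
    rw [ih (fun i => f i.castSucc)]
    simp only [Fin.castSucc_zero, Fin.val_last, Fin.succ_last, pow_succ]
    ring

def fuseAt {α : Type*} {n : ℕ} (j : Fin (n + 1)) (x : α) (c : Fin (n + 2) → α) :
    Fin (n + 1) → α := fun i =>
  if (i : ℕ) < (j : ℕ) then c i.castSucc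
  else if (i : ℕ) = (j : ℕ) then x
  else c i.succ

section fuseAt

variable {α : Type*} {n : ℕ}

theorem mergeAt_eq_fuseAt [Mul α] (j : Fin (n + 1)) (a : Fin (n + 2) → α) :
    mergeAt j a = fuseAt j (a j.castSucc * a j.succ) a := by
  funext i
  simp only [mergeAt, fuseAt]
  split_ifs with _ h <;> first | rfl | rw [Fin.ext h]

theorem fuseAt_eq_update_removeNth_succ (j : Fin (n + 1)) (x : α) (c : Fin (n + 2) → α) :
    fuseAt j x c = update (Fin.removeNth j.succ c) j x := by
  funext i
  simp only [fuseAt, update_apply, Fin.removeNth_apply, Fin.ext_iff, Fin.succAbove, Fin.lt_def,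
    Fin.val_castSucc, Fin.val_succ]
  split_ifs <;> first | rfl | omega

theorem fuseAt_eq_update_removeNth_castSucc (j : Fin (n + 1)) (x : α) (c : Fin (n + 2) → α) :
    fuseAt j x c = update (Fin.removeNth j.castSucc c) j x := by
  funext i
  simp only [fuseAt, update_apply, Fin.removeNth_apply, Fin.ext_iff, Fin.succAbove, Fin.lt_def,
    Fin.val_castSucc]
  split_ifs <;> first | rfl | omega

theorem fuseAt_last (x : α) (c : Fin (n + 2) → α) :
    fuseAt (Fin.last n) x c = update (Fin.init c) (Fin.last n) x := by
  rw [fuseAt_eq_update_removeNth_succ, Fin.succ_last, Fin.removeNth_last]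

theorem MultilinearMap.map_fuseAt_add {S M : Type*} [Semiring S] [AddCommMonoid α] [Module S α]
    [AddCommMonoid M] [Module S M] (f : MultilinearMap S (fun _ : Fin (n + 1) => α) M)
    (j : Fin (n + 1)) (x y : α) (c : Fin (n + 2) → α) :
    f (fuseAt j (x + y) c) = f (fuseAt j x c) + f (fuseAt j y c) := by
  simp only [fuseAt_eq_update_removeNth_succ, f.map_update_add]

end fuseAt

namespace Brackets

variable {R M : Type*}

/-- Property (I) of the brackets. -/
def IsCyclic (br : ∀ n : ℕ, (Fin n → R) → M) : Prop :=
  ∀ (n : ℕ) (V : Fin (n + 1) → R), br (n + 1) V = br (n + 1) (fun i => V (i + 1))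

theorem IsCyclic.comp_add_right {br : ∀ n : ℕ, (Fin n → R) → M} (h : IsCyclic br) {n : ℕ}
    (V : Fin (n + 1) → R) (r : Fin (n + 1)) : br (n + 1) (fun i => V (i + r)) = br (n + 1) V := by
  induction r using Fin.induction with
  | zero => simp
  | succ r ih =>
    rw [← ih, h n (fun i => V (i + r.castSucc)), ← Fin.coeSucc_eq_succ]
    congr 1; funext i; congr 1; abel

variable [Ring R] [AddCommGroup M]

/-- Property (II) of the brackets. -/
def CommutationRule (D : R) (A : Set R) (br : ∀ n : ℕ, (Fin n → R) → M) : Prop :=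
  ∀ (n : ℕ) (V : Fin (n + 1) → R) (a : R), a ∈ A →
    br (n + 1) (update V 0 (a * V 0)) - br (n + 1) (update V (Fin.last n) (V (Fin.last n) * a)) =
      br (n + 2) (Fin.snoc V ⁅D, a⁆)

variable {br : ∀ n : ℕ, (Fin n → R) → M} {D : R} {A : Set R}

/-- Rotating by `q + 1` turns the gap after entry `q` into the gap between the last entry and the
first, where the commutation rule applies. -/
theorem CommutationRule.sub_eq_insertNth (hcyc : IsCyclic br) (hcomm : CommutationRule D A br)
    {n : ℕ} (V : Fin (n + 1) → R) (q : Fin n) {a : R} (ha : a ∈ A) :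
    br (n + 1) (update V q.succ (a * V q.succ)) -
        br (n + 1) (update V q.castSucc (V q.castSucc * a)) =
      br (n + 2) (Fin.insertNth q.succ.castSucc ⁅D, a⁆ V) := by
  have hrot : ∀ p x, (fun i => update V p x (i + q.succ)) =
      update (fun i => V (i + q.succ)) (p - q.succ) x := fun p x => by
    funext i; simp only [update_apply, eq_sub_iff_add_eq]
  rw [← hcyc.comp_add_right _ q.succ, ← hcyc.comp_add_right (update V _ _) q.succ,
    ← hcyc.comp_add_right _ q.succ.succ, hrot, hrot, sub_self,
    ← eq_sub_of_add_eq (Fin.last_add_succ q), Fin.insertNth_comp_add_succ_succ]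
  simpa [Fin.last_add_succ] using hcomm n (fun i => V (i + q.succ)) a ha

theorem CommutationRule.fuseAt_sub_fuseAt (hcyc : IsCyclic br) (hcomm : CommutationRule D A br)
    {n : ℕ} (c : Fin (n + 2) → R) (q : Fin n) {a : R} (ha : a ∈ A)
    (hc : c q.succ.castSucc = ⁅D, a⁆) :
    br (n + 1) (fuseAt q.succ (a * c q.succ.succ) c) -
        br (n + 1) (fuseAt q.castSucc (c q.castSucc.castSucc * a) c) =
      br (n + 2) c := by
  have h := hcomm.sub_eq_insertNth hcyc (Fin.removeNth q.succ.castSucc c) q ha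
  rw [Fin.insertNth_removeNth, ← hc, update_eq_self] at h
  rw [fuseAt_eq_update_removeNth_castSucc, fuseAt_eq_update_removeNth_succ, Fin.succ_castSucc]
  simpa [Fin.removeNth_apply, ← Fin.succ_castSucc] using h

theorem CommutationRule.update_init_sub_fuseAt_last (hcomm : CommutationRule D A br) {n : ℕ}
    (c : Fin (n + 2) → R) {a : R} (ha : a ∈ A) (hc : c (Fin.last (n + 1)) = ⁅D, a⁆) :
    br (n + 1) (update (Fin.init c) 0 (a * c 0)) -
        br (n + 1) (fuseAt (Fin.last n) (c (Fin.last n).castSucc * a) c) =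
      br (n + 2) c := by
  rw [fuseAt_last]
  simpa [← hc, Fin.init] using hcomm n (Fin.init c) a ha

end Brackets

theorem Ring.lie_mul {R : Type*} [Ring R] (D x y : R) : ⁅D, x * y⁆ = ⁅D, x⁆ * y + x * ⁅D, y⁆ := by
  simp only [Ring.lie_def]; noncomm_ring

section phiEntries

variable {R : Type*} [Ring R] {m : ℕ}

def phiEntries (D : R) (a : Fin (m + 2) → R) : Fin (m + 1) → R :=
  fun i => if i = 0 then a 0 * ⁅D, a 1⁆ else ⁅D, a i.succ⁆

theorem phiEntries_fuseAt_zero (D x : R) (a : Fin (m + 3) → R) :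
    phiEntries D (fuseAt 0 x a) = fuseAt 0 (x * ⁅D, a 2⁆) (phiEntries D a) := by
  funext i
  simp only [phiEntries, fuseAt, Fin.ext_iff, Fin.val_succ]
  split_ifs <;> first | rfl | omega | simp_all

theorem phiEntries_fuseAt_one (D x : R) (a : Fin (m + 3) → R) :
    phiEntries D (fuseAt 1 x a) = fuseAt 0 (a 0 * ⁅D, x⁆) (phiEntries D a) := by
  funext i
  simp only [phiEntries, fuseAt, Fin.ext_iff, Fin.val_succ]
  split_ifs <;> first | rfl | omega | simp_all

theorem phiEntries_fuseAt_succ_succ (D x : R) (a : Fin (m + 3) → R) (q : Fin m) :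
    phiEntries D (fuseAt q.succ.succ x a) = fuseAt q.succ ⁅D, x⁆ (phiEntries D a) := by
  funext i
  simp only [phiEntries, fuseAt, Fin.ext_iff, Fin.val_succ]
  split_ifs <;> first | rfl | omega | simp_all

theorem phiEntries_lastFace (D : R) (a : Fin (m + 3) → R) :
    phiEntries D
        (fun i : Fin (m + 2) => if i = 0 then a (Fin.last (m + 2)) * a 0 else a i.castSucc) =
      update (Fin.init (phiEntries D a)) 0 (a (Fin.last (m + 2)) * phiEntries D a 0) := by
  funext i
  simp only [phiEntries, update_apply, Fin.init]
  split_ifs <;> simp_all [mul_assoc]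

end phiEntries

theorem phiCochain_eq_phiEntries {H : Type*} [NormedAddCommGroup H] [InnerProductSpace ℂ H]
    (D : H →L[ℂ] H) (br : ∀ n : ℕ, (Fin n → (H →L[ℂ] H)) → ℂ) (m : ℕ)
    (a : Fin (m + 2) → (H →L[ℂ] H)) : phiCochain D br m a = br (m + 1) (phiEntries D a) :=
  rfl

open Brackets in
theorem phiCochain_coboundary {H : Type*} [NormedAddCommGroup H] [InnerProductSpace ℂ H]
    (A : Set (H →L[ℂ] H)) (D : H →L[ℂ] H)
    (bracket : ∀ n : ℕ, MultilinearMap ℂ (fun _ : Fin n => H →L[ℂ] H) ℂ)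
    (hcyc : IsCyclic fun n => ⇑(bracket n)) (hcomm : CommutationRule D A fun n => ⇑(bracket n))
    (m : ℕ) (a : Fin (m + 3) → H →L[ℂ] H) (ha : ∀ i, a i ∈ A) :
    (∑ j : Fin (m + 2),
        (-1 : ℂ) ^ (j : ℕ) * phiCochain D (fun n => ⇑(bracket n)) m (mergeAt j a)) +
      (-1 : ℂ) ^ (m + 2) * phiCochain D (fun n => ⇑(bracket n)) m
          (fun i => if i = 0 then a (Fin.last (m + 2)) * a 0 else a i.castSucc) =
      (∑ i ∈ Finset.range (m + 1), (-1 : ℂ) ^ i) * bracket (m + 2) (phiEntries D a) := by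
  set c := phiEntries D a
  set T : Fin (m + 1) → ℂ := fun p => bracket (m + 1) (fuseAt p (c p.castSucc * a p.succ.succ) c)
  set X := bracket (m + 1) (fuseAt 0 (a 0 * a 1 * ⁅D, a 2⁆) c)
  have hc : ∀ p : Fin (m + 1), c p.succ = ⁅D, a p.succ.succ⁆ := fun p =>
    if_neg (Fin.succ_ne_zero p)
  have face_zero : phiCochain D (fun n => ⇑(bracket n)) m (mergeAt 0 a) = X := by
    rw [phiCochain_eq_phiEntries, mergeAt_eq_fuseAt, phiEntries_fuseAt_zero]
    rfl
  have face_one : phiCochain D (fun n => ⇑(bracket n)) m (mergeAt (Fin.succ 0) a) = T 0 + X := by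
    rw [phiCochain_eq_phiEntries, mergeAt_eq_fuseAt, Fin.succ_zero_eq_one, phiEntries_fuseAt_one,
      Ring.lie_mul, mul_add, ← mul_assoc, ← mul_assoc, (bracket _).map_fuseAt_add]
    rfl
  have face_succ_succ : ∀ q : Fin m,
      phiCochain D (fun n => ⇑(bracket n)) m (mergeAt q.succ.succ a) =
        T q.castSucc + T q.succ + bracket (m + 2) c := by
    intro q
    have hcq : c q.succ.castSucc = ⁅D, a q.succ.succ.castSucc⁆ := by
      rw [← Fin.succ_castSucc, hc, Fin.succ_castSucc, Fin.succ_castSucc]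
    have hcomm_q := hcomm.fuseAt_sub_fuseAt hcyc c q (ha q.succ.succ.castSucc) hcq
    rw [phiCochain_eq_phiEntries, mergeAt_eq_fuseAt, phiEntries_fuseAt_succ_succ, Ring.lie_mul,
      (bracket _).map_fuseAt_add, ← hcq, ← hc]
    simp only [T, Fin.succ_castSucc]
    linear_combination hcomm_q
  have face_last : phiCochain D (fun n => ⇑(bracket n)) m
      (fun i => if i = 0 then a (Fin.last (m + 2)) * a 0 else a i.castSucc) =
      T (Fin.last m) + bracket (m + 2) c := by
    have hcomm_last := hcomm.update_init_sub_fuseAt_last c (ha (Fin.last (m + 2)))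
      (hc (Fin.last m))
    rw [phiCochain_eq_phiEntries, phiEntries_lastFace, eq_add_of_sub_eq hcomm_last]
    simp only [T, Fin.succ_last]
    ring
  have hsum : ∑ q : Fin m,
      (-1 : ℂ) ^ (q.succ.succ : ℕ) * (T q.castSucc + T q.succ + bracket (m + 2) c) =
      T 0 - (-1) ^ m * T (Fin.last m) +
        (∑ i ∈ Finset.range m, (-1 : ℂ) ^ i) * bracket (m + 2) c := by
    rw [← Fin.sum_neg_one_pow_mul_castSucc_add_succ,
      ← Fin.sum_univ_eq_sum_range (fun i => (-1 : ℂ) ^ i), Finset.sum_mul, ← Finset.sum_add_distrib]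
    refine Finset.sum_congr rfl fun q _ => ?_
    simp only [Fin.val_succ, pow_succ]
    ring
  rw [Fin.sum_univ_succ, Fin.sum_univ_succ, face_zero, face_one, face_last,
    Finset.sum_congr rfl fun q _ => by rw [face_succ_succ q], hsum, Finset.sum_range_succ]
  simp only [Fin.val_zero, Fin.val_succ, pow_succ, pow_zero]
  ring

theorem b_phi_even_eq_zero_general
    {H : Type*} [NormedAddCommGroup H] [InnerProductSpace ℂ H]
    (A : Subalgebra ℂ (H →L[ℂ] H)) (D : H →L[ℂ] H)
    (bracket : ∀ n : ℕ, MultilinearMap ℂ (fun _ : Fin n => H →L[ℂ] H) ℂ)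
    (hcycl : ∀ (n : ℕ) (V : Fin (n + 1) → (H →L[ℂ] H)),
      bracket (n + 1) V = bracket (n + 1) (fun i => V (i + 1)))
    (hcomm : ∀ (n : ℕ) (V : Fin (n + 1) → (H →L[ℂ] H)) (a : H →L[ℂ] H), a ∈ A →
      bracket (n + 1) (Function.update V 0 (a * V 0)) -
        bracket (n + 1) (Function.update V (Fin.last n) (V (Fin.last n) * a)) =
      bracket (n + 2) (Fin.snoc V (D * a - a * D)))
    (k : ℕ) (a : Fin (2 * k + 4) → (H →L[ℂ] H)) (ha : ∀ i, a i ∈ A) :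
    (∑ j : Fin (2 * k + 3),
        (-1 : ℂ) ^ (j : ℕ) *
          phiCochain D (fun n => ⇑(bracket n)) (2 * k + 1) (mergeAt j a)) +
      (-1 : ℂ) ^ (2 * k + 3) *
        phiCochain D (fun n => ⇑(bracket n)) (2 * k + 1)
          (fun i => if i = 0 then a (Fin.last (2 * k + 3)) * a 0 else a i.castSucc) = 0 := by
  have h := phiCochain_coboundary (A : Set (H →L[ℂ] H)) D bracket hcycl hcomm (2 * k + 1) a ha
  rw [neg_one_geom_sum, if_pos ⟨k + 1, by ring⟩, zero_mul] at h
  exact h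

/-- For even `n = 2k+2`, the cochain `φ_n` is a Hochschild cocycle: `bφ_n = 0`. -/
theorem b_phi_even_eq_zero
    {H : Type*} [NormedAddCommGroup H] [InnerProductSpace ℂ H] [CompleteSpace H]
    (A : Subalgebra ℂ (H →L[ℂ] H)) (D : H →L[ℂ] H) (hD : IsSelfAdjoint D)
    (bracket : ∀ n : ℕ, MultilinearMap ℂ (fun _ : Fin n => H →L[ℂ] H) ℂ)
    (hcycl : ∀ (n : ℕ) (V : Fin (n + 1) → (H →L[ℂ] H)),
      bracket (n + 1) V = bracket (n + 1) (fun i => V (i + 1)))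
    (hcomm : ∀ (n : ℕ) (V : Fin (n + 1) → (H →L[ℂ] H)) (a : H →L[ℂ] H), a ∈ A →
      bracket (n + 1) (Function.update V 0 (a * V 0)) -
        bracket (n + 1) (Function.update V (Fin.last n) (V (Fin.last n) * a)) =
      bracket (n + 2) (Fin.snoc V (D * a - a * D)))
    (k : ℕ) (a : Fin (2 * k + 4) → (H →L[ℂ] H)) (ha : ∀ i, a i ∈ A) :
    (∑ j : Fin (2 * k + 3),
        (-1 : ℂ) ^ (j : ℕ) *
          phiCochain D (fun n => ⇑(bracket n)) (2 * k + 1) (mergeAt j a)) +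
      (-1 : ℂ) ^ (2 * k + 3) *
        phiCochain D (fun n => ⇑(bracket n)) (2 * k + 1)
          (fun i => if i = 0 then a (Fin.last (2 * k + 3)) * a 0 else a i.castSucc) = 0 :=
  b_phi_even_eq_zero_general A D bracket hcycl hcomm k a ha
end

section
/- Cauchy's integral formula for divided differences: for a function g analytic in a region containing a contour enclosing points x_0,...,x_n, the divided difference satisfies g[x_0,...,x_n] = (1/2πi) ∮ g(z)/((z−x_0)···(z−x_n)) dz. -/
/-- The divided difference `g[x_0,…,x_n]`, defined recursively by `g[x] = g(x)` and
`g[x_0,…,x_n] = (g[x_1,…,x_n] − g[x_0,…,x_{n−1}])/(x_n − x_0)`. -/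
noncomputable def divDiffC (g : ℂ → ℂ) : (n : ℕ) → (Fin (n + 1) → ℂ) → ℂ
  | 0, x => g (x 0)
  | n + 1, x =>
      (divDiffC g n (fun i => x i.succ) - divDiffC g n (fun i => x i.castSucc)) /
        (x (Fin.last (n + 1)) - x 0)

/-!
Induction on the number of nodes. For one node this is Cauchy's integral formula. In the
inductive step, the partial-fraction identity
`1/∏_{j≥1} (z - x_j) - 1/∏_{j≤n} (z - x_j) = (x_n - x_0)/∏_j (z - x_j)`
turns the difference of the two contour integrals for `n` nodes, which by induction equals
`2πi (g[x_1,…,x_n] - g[x_0,…,x_{n-1}])`, into `(x_n - x_0)` times the integral for all the nodes.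
-/

open Metric Complex

lemma div_prod_succ_sub_div_prod_castSucc {K : Type*} [Field K] {n : ℕ} (a z : K)
    (x : Fin (n + 2) → K) (hz : ∀ j, z - x j ≠ 0) :
    a / ∏ j : Fin (n + 1), (z - x j.succ) - a / ∏ j : Fin (n + 1), (z - x j.castSucc) =
      (x (Fin.last (n + 1)) - x 0) * (a / ∏ j, (z - x j)) := by
  have hsucc : ∏ j : Fin (n + 1), (z - x j.succ) ≠ 0 :=
    Finset.prod_ne_zero_iff.2 fun j _ => hz _
  have hcastSucc : ∏ j : Fin (n + 1), (z - x j.castSucc) ≠ 0 :=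
    Finset.prod_ne_zero_iff.2 fun j _ => hz _
  have hall : ∏ j, (z - x j) ≠ 0 := Finset.prod_ne_zero_iff.2 fun j _ => hz _
  rw [div_sub_div _ _ hsucc hcastSucc, mul_div_assoc',
    div_eq_div_iff (mul_ne_zero hsucc hcastSucc) hall]
  linear_combination a * (∏ j : Fin (n + 1), (z - x j.castSucc)) * Fin.prod_univ_succ (z - x ·) -
    a * (∏ j : Fin (n + 1), (z - x j.succ)) * Fin.prod_univ_castSucc (z - x ·)

lemma sub_ne_zero_of_mem_sphere_of_mem_ball {E : Type*} [NormedAddCommGroup E] {c z w : E} {R : ℝ} (hz : z ∈ sphere c R)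
    (hw : w ∈ ball c R) : z - w ≠ 0 :=
  sub_ne_zero.2 fun h => sphere_disjoint_ball.ne_of_mem hz hw h

lemma circleIntegrable_div_prod_sub {ι : Type*} [Fintype ι] {g : ℂ → ℂ} {c : ℂ} {R : ℝ}
    (hR : 0 ≤ R) (hg : ContinuousOn g (sphere c R)) (y : ι → ℂ) (hy : ∀ j, y j ∈ ball c R) :
    CircleIntegrable (fun z => g z / ∏ j, (z - y j)) c R :=
  ContinuousOn.circleIntegrable hR <|
    hg.div (continuousOn_finsetProd _ fun _ _ => by fun_prop) fun _ hz =>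
      Finset.prod_ne_zero_iff.2 fun j _ => sub_ne_zero_of_mem_sphere_of_mem_ball hz (hy j)

theorem divDiffC_eq_circleIntegral {g : ℂ → ℂ} {c : ℂ} {R : ℝ}
    (hg : DifferentiableOn ℂ g (closedBall c R)) {n : ℕ} {x : Fin (n + 1) → ℂ}
    (hx : Function.Injective x) (hmem : ∀ j, x j ∈ ball c R) :
    divDiffC g n x = (2 * (Real.pi : ℂ) * I)⁻¹ * ∮ z in C(c, R), g z / ∏ j, (z - x j) := by
  have hR : 0 < R := nonempty_ball.1 ⟨_, hmem 0⟩
  have h2πI : (2 * (Real.pi : ℂ) * I) ≠ 0 := by simp [Real.pi_ne_zero]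
  induction n with
  | zero =>
    simp only [Fin.prod_univ_succ, Fin.prod_univ_zero, mul_one, divDiffC]
    rw [circleIntegral_div_sub_of_differentiable_on_off_countable Set.countable_empty (hmem 0)
      hg.continuousOn fun z hz => hg.differentiableAt (closedBall_mem_nhds_of_mem hz.1)]
    field_simp
  | succ n ih =>
    have hsphere : ContinuousOn g (sphere c R) := hg.continuousOn.mono sphere_subset_closedBall
    have hends : x (Fin.last (n + 1)) - x 0 ≠ 0 :=
      sub_ne_zero.2 fun h => Fin.last_pos.ne' (hx h)
    have hdiff : (∮ z in C(c, R), (g z / ∏ j : Fin (n + 1), (z - x j.succ) -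
        g z / ∏ j : Fin (n + 1), (z - x j.castSucc))) =
        (x (Fin.last (n + 1)) - x 0) * ∮ z in C(c, R), g z / ∏ j, (z - x j) := by
      rw [← smul_eq_mul, ← circleIntegral.integral_smul]
      exact circleIntegral.integral_congr hR.le fun z hz => div_prod_succ_sub_div_prod_castSucc
        _ _ _ fun j => sub_ne_zero_of_mem_sphere_of_mem_ball hz (hmem j)
    rw [divDiffC, ih (x := fun i => x i.succ) (hx.comp (Fin.succ_injective _)) fun j => hmem _,
      ih (x := fun i => x i.castSucc) (hx.comp (Fin.castSucc_injective _)) fun j => hmem _, ← mul_sub,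
      ← circleIntegral.integral_sub
        (circleIntegrable_div_prod_sub hR.le hsphere _ fun j => hmem _)
        (circleIntegrable_div_prod_sub hR.le hsphere _ fun j => hmem _), hdiff]
    field_simp

/-- Cauchy's integral formula for divided differences: for `g` analytic on a region
containing a contour enclosing the (distinct) points `x_0,…,x_n`,
`g[x_0,…,x_n] = (1/2πi) ∮ g(z)/((z−x_0)⋯(z−x_n)) dz`. -/
theorem divDiff_eq_contour_integral (g : ℂ → ℂ) (n : ℕ) (R : ℝ)
    (x : Fin (n + 1) → ℂ) (hx : Function.Injective x)
    (hmem : ∀ j, x j ∈ Metric.ball (0 : ℂ) R)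
    (hg : DifferentiableOn ℂ g (Metric.closedBall 0 R)) :
    divDiffC g n x =
      (2 * (Real.pi : ℂ) * Complex.I)⁻¹ *
        ∮ z in C(0, R), g z / ∏ j, (z - x j) :=
  divDiffC_eq_circleIntegral hg hx hmem
end
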